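/- For k ≥ 1, the generating series of k-admissible strings satisfies Z_w(k)(t) = t^{2-p}(t^{2-p} Z_w(v,0,u)(t))^{k-1} Z_w(v,0)(t)^2. -/

import Mathlib

open scoped BigOperators
open PowerSeries

/-- Number of (possibly overlapping) occurrences of the block `w` in `X`. -/
def occCount {α : Type*} [DecidableEq α] (w X : List α) : ℕ :=
  ((List.range X.length).filter fun i => (X.drop i).take w.length = w).length

/-- Number of strings of length `l` over `{0,…,b-1}` with exactly `k` occurrences of `w`,
starting with `x` and ending with `y` (an empty `x` or `y` imposes no constraint). -/
def Nxy (b : ℕ) (w x y : List (Fin b)) (k l : ℕ) : ℕ :=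
  Fintype.card {f : Fin l → Fin b //
    occCount w (List.ofFn f) = k ∧ x <+: List.ofFn f ∧ y <:+ List.ofFn f}

/-- The generating series `Z_w(x,k,y)(t)` as a formal power series over `ℚ`. -/
noncomputable def Zser (b : ℕ) (w x y : List (Fin b)) (k : ℕ) : PowerSeries ℚ :=
  PowerSeries.mk fun l => (Nxy b w x y k l : ℚ)

/-!
Cutting a string with `k + 1` occurrences of `w` just after its first occurrence, the two pieces
overlapping in `v`, is a bijection onto pairs (string whose only occurrence of `w` is a final
one, string with prefix `v` and `k` occurrences); deleting the last letter of the first piece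
leaves a `w`-avoiding string ending in `u`. Hence `t^{p-1} Z(x, k+1) = t Z(x, 0, u) Z(v, k)` for
every prefix `x` shorter than `w`, and iterating with `x = v` and then `x = []` gives the theorem
once we know `Z(0, u) = Z(v, 0)`. For that, extending a `w`-avoiding string by one letter on the
right (resp. left) gives either a `w`-avoiding string or one whose only occurrence is at the end
(resp. start), so these two kinds of strings are equinumerous.
-/

open Finset

section occCount

variable {α : Type*} [DecidableEq α] {w : List α}

theorem occCount_cons (X : List α) (a : α) :
    occCount w (a :: X) = (if w <+: a :: X then 1 else 0) + occCount w X := by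
  have hpre : ((a :: X).take w.length = w) ↔ w <+: a :: X := by
    rw [List.prefix_iff_eq_take, eq_comm]
  simp only [occCount, List.length_cons, List.range_succ_eq_map, List.filter_cons,
    List.drop_zero, hpre, List.filter_map, Function.comp_def,
    Nat.succ_eq_add_one, List.drop_succ_cons]
  by_cases h : w <+: a :: X <;> simp [h, Nat.add_comm]

theorem occCount_append_singleton (X : List α) (a : α) :
    occCount w (X ++ [a]) = occCount w X + if w <:+ X ++ [a] then 1 else 0 := by
  induction X with
  | nil =>
    have : w <+: [a] ↔ w <:+ [a] := by
      rw [← List.nil_append [a], List.prefix_concat_iff, List.suffix_concat_iff]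
      simp [or_comm]
    rw [List.nil_append, occCount_cons, add_comm]
    simp only [this]
  | cons c X ih =>
    have hpre : w <+: c :: X ++ [a] ↔ w = c :: X ++ [a] ∨ w <+: c :: X := List.prefix_concat_iff
    have hsuf : w <:+ c :: X ++ [a] ↔ w = c :: X ++ [a] ∨ w <:+ X ++ [a] := List.suffix_cons_iff
    rw [List.cons_append, occCount_cons, ih, occCount_cons, ← List.cons_append]
    simp only [hpre, hsuf]
    by_cases hw : w = c :: X ++ [a]
    · have h1 : ¬ w <+: c :: X := fun h => absurd h.length_le (by simp [hw])
      have h2 : ¬ w <:+ X ++ [a] := fun h => absurd h.length_le (by simp [hw])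
      rw [if_pos (Or.inl hw), if_pos (Or.inl hw), if_neg h1, if_neg h2]
      omega
    · simp only [hw, false_or]
      omega

theorem occCount_eq_zero_of_length_lt {X : List α} (h : X.length < w.length) :
    occCount w X = 0 := by
  induction X with
  | nil => rfl
  | cons a X ih =>
    have hpre : ¬ w <+: a :: X := fun hp => absurd hp.length_le (by omega)
    rw [occCount_cons, if_neg hpre, ih (by simp at h; omega)]

theorem occCount_le_append_left (P X : List α) : occCount w X ≤ occCount w (P ++ X) := by
  induction P with
  | nil => rfl
  | cons a P ih => rw [List.cons_append, occCount_cons]; omega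

theorem occCount_pos_of_suffix (hw : w ≠ []) {X : List α} (h : w <:+ X) :
    0 < occCount w X := by
  obtain ⟨P, rfl⟩ := h
  refine lt_of_lt_of_le ?_ (occCount_le_append_left P w)
  obtain ⟨a, w', rfl⟩ := List.exists_cons_of_ne_nil hw
  rw [occCount_cons, if_pos (List.prefix_refl _)]
  omega

theorem occCount_reverse (X : List α) : occCount w.reverse X.reverse = occCount w X := by
  induction X using List.reverseRecOn with
  | nil => rfl
  | append_singleton X a ih =>
    have hpre : w.reverse <+: a :: X.reverse ↔ w <:+ X ++ [a] := by
      simpa using List.reverse_prefix (l₁ := w) (l₂ := X ++ [a])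
    rw [List.reverse_append, List.reverse_singleton, List.singleton_append, occCount_cons, ih,
      occCount_append_singleton, add_comm]
    simp only [hpre]

-- An occurrence starting in `A` ends inside `A ++ S`.
theorem occCount_append_append {S : List α} (h : w.length ≤ S.length + 1) (A R : List α) :
    occCount w (A ++ S ++ R) + occCount w S = occCount w (A ++ S) + occCount w (S ++ R) := by
  induction A with
  | nil => simp [add_comm]
  | cons a A ih =>
    have hpre : w <+: a :: A ++ S ++ R ↔ w <+: a :: A ++ S := by
      refine ⟨fun hR => List.prefix_of_prefix_length_le hR (List.prefix_append _ _)
        (by simp; omega), fun hS => hS.trans (List.prefix_append _ _)⟩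
    simp only [List.cons_append, occCount_cons] at ih ⊢
    simp only [← List.cons_append, hpre]
    omega

theorem occCount_append_of_suffix (hw : w ≠ []) {Y : List α} (hY : w <:+ Y) (R : List α) :
    occCount w (Y ++ R) = occCount w Y + occCount w (w.drop 1 ++ R) := by
  obtain ⟨P, rfl⟩ := hY
  obtain ⟨a, w', rfl⟩ := List.exists_cons_of_ne_nil hw
  have key := occCount_append_append (w := a :: w') (S := w') (by simp) (P ++ [a]) R
  rw [occCount_eq_zero_of_length_lt (X := w') (by simp)] at key
  simpa [List.append_assoc] using key

theorem occCount_lt_append (hw : w ≠ []) {Y Z : List α} (hY : w <:+ Y) (hYZ : w <:+ Y ++ Z)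
    (hZ : Z ≠ []) : occCount w Y < occCount w (Y ++ Z) := by
  rw [occCount_append_of_suffix hw hY]
  have htail : w.drop 1 ++ Z <:+ Y ++ Z := by
    obtain ⟨P, rfl⟩ := (List.drop_suffix 1 w).trans hY
    exact ⟨P, by simp⟩
  have hlen : w.length ≤ (w.drop 1 ++ Z).length := by
    have := List.length_pos_iff.mpr hZ
    simp; omega
  have := occCount_pos_of_suffix hw (List.suffix_of_suffix_length_le hYZ htail hlen)
  omega

theorem exists_append_eq_of_occCount_ne_zero {X : List α} (h : occCount w X ≠ 0) :
    ∃ Y R, X = Y ++ R ∧ w <:+ Y ∧ occCount w Y = 1 := by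
  induction X using List.reverseRecOn with
  | nil => exact absurd rfl h
  | append_singleton X a ih =>
    rw [occCount_append_singleton] at h
    by_cases hX : occCount w X = 0
    · have hs : w <:+ X ++ [a] := by
        by_contra hs
        simp [hX, hs] at h
      exact ⟨X ++ [a], [], by simp, hs, by rw [occCount_append_singleton, hX, if_pos hs]⟩
    · obtain ⟨Y, R, rfl, hY, hY1⟩ := ih hX
      exact ⟨Y, R ++ [a], by simp, hY, hY1⟩

theorem eq_of_append_eq_append_of_occCount_eq_one (hw : w ≠ []) {Y₁ Y₂ R₁ R₂ : List α}
    (h : Y₁ ++ R₁ = Y₂ ++ R₂) (hY₁ : w <:+ Y₁) (hY₂ : w <:+ Y₂)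
    (h₁ : occCount w Y₁ = 1) (h₂ : occCount w Y₂ = 1) : Y₁ = Y₂ := by
  rcases List.append_eq_append_iff.mp h with ⟨Z, rfl, -⟩ | ⟨Z, rfl, -⟩
  · rcases eq_or_ne Z [] with rfl | hZ
    · simp
    · have := occCount_lt_append hw hY₁ hY₂ hZ
      omega
  · rcases eq_or_ne Z [] with rfl | hZ
    · simp
    · have := occCount_lt_append hw hY₂ hY₁ hZ
      omega

end occCount

def words (b l : ℕ) : Finset (List (Fin b)) :=
  (univ : Finset (Fin l → Fin b)).map ⟨List.ofFn, List.ofFn_injective⟩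

section words

variable {b : ℕ}

@[simp]
theorem mem_words {l : ℕ} {X : List (Fin b)} : X ∈ words b l ↔ X.length = l := by
  simp only [words, mem_map, mem_univ, true_and, Function.Embedding.coeFn_mk]
  refine ⟨fun ⟨f, hf⟩ => hf ▸ List.length_ofFn, fun h => ?_⟩
  subst h
  exact ⟨X.get, List.ofFn_get X⟩

theorem card_filter_words_succ (P : List (Fin b) → Prop) [DecidablePred P] (m : ℕ) :
    #{X ∈ words b (m + 1) | P X} = ∑ a : Fin b, #{Y ∈ words b m | P (Y ++ [a])} := by
  rw [← card_sigma]
  symm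
  refine card_bij (fun s _ => s.2 ++ [s.1]) ?_ ?_ ?_
  · rintro ⟨a, Y⟩ hs
    simp only [mem_sigma, mem_univ, mem_filter, mem_words, true_and] at hs ⊢
    exact ⟨by simp [hs.1], hs.2⟩
  · rintro ⟨a₁, Y₁⟩ - ⟨a₂, Y₂⟩ - h
    obtain ⟨rfl, h'⟩ := List.append_inj' h rfl
    cases h'
    rfl
  · intro X hX
    simp only [mem_filter, mem_words] at hX
    have hne : X ≠ [] := List.ne_nil_of_length_pos (by omega)
    refine ⟨⟨X.getLast hne, X.dropLast⟩, ?_, List.dropLast_append_getLast hne⟩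
    simp only [mem_sigma, mem_univ, mem_filter, mem_words, true_and,
      List.length_dropLast, List.dropLast_append_getLast hne]
    exact ⟨by omega, hX.2⟩

end words

section counting

variable {b : ℕ} {w x y : List (Fin b)} {k l : ℕ}

theorem Nxy_eq_card :
    Nxy b w x y k l = #{X ∈ words b l | occCount w X = k ∧ x <+: X ∧ y <:+ X} := by
  rw [Nxy, Fintype.card_subtype, words, filter_map, card_map]
  rfl

theorem Nxy_eq_zero_of_lt_length_prefix (h : l < x.length) : Nxy b w x y k l = 0 := by
  rw [Nxy_eq_card, card_eq_zero, filter_eq_empty_iff]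
  rintro X hX ⟨-, hx, -⟩
  have := hx.length_le
  simp only [mem_words] at hX
  omega

theorem Nxy_eq_zero_of_lt_length_suffix (h : l < y.length) : Nxy b w x y k l = 0 := by
  rw [Nxy_eq_card, card_eq_zero, filter_eq_empty_iff]
  rintro X hX ⟨-, -, hy⟩
  have := hy.length_le
  simp only [mem_words] at hX
  omega

theorem Nxy_reverse (w x y : List (Fin b)) (k l : ℕ) :
    Nxy b w.reverse y.reverse x.reverse k l = Nxy b w x y k l := by
  have hocc (X : List (Fin b)) : occCount w.reverse X = occCount w X.reverse := by
    simpa using occCount_reverse (w := w) X.reverse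
  have hpre (X : List (Fin b)) : y.reverse <+: X ↔ y <:+ X.reverse := by
    simpa using List.reverse_prefix (l₁ := y) (l₂ := X.reverse)
  have hsuf (X : List (Fin b)) : x.reverse <:+ X ↔ x <+: X.reverse := by
    simpa using List.reverse_suffix (l₁ := x) (l₂ := X.reverse)
  rw [Nxy_eq_card, Nxy_eq_card]
  refine card_nbij' List.reverse List.reverse ?_ ?_ ?_ ?_ <;> intro X <;>
    simp [hocc, hpre, hsuf] <;> tauto

theorem Nxy_one_suffix_succ (hx : x.length < w.length) (c : ℕ) :
    Nxy b w x w 1 (c + 1) = Nxy b w x (w.take (w.length - 1)) 0 c := by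
  have hw : w ≠ [] := List.ne_nil_of_length_pos (by omega)
  rw [← List.dropLast_eq_take]
  set e := w.getLast hw
  have hsuf (Y : List (Fin b)) (a : Fin b) : w <:+ Y ++ [a] ↔ w.dropLast <:+ Y ∧ e = a := by
    conv_lhs => rw [← List.dropLast_append_getLast hw]
    rw [List.suffix_append_inj_of_length_eq (s₁ := [e]) (s₂ := [a]) rfl, List.singleton_inj]
  have hpre {Y : List (Fin b)} (hu : w.dropLast <:+ Y) : x <+: Y ++ [e] ↔ x <+: Y := by
    refine ⟨fun h => List.prefix_of_prefix_length_le h (List.prefix_append _ _) ?_,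
      fun h => h.trans (List.prefix_append _ _)⟩
    have := hu.length_le
    simp only [List.length_dropLast] at this
    omega
  rw [Nxy_eq_card, card_filter_words_succ, Nxy_eq_card, sum_eq_single e]
  · refine congrArg card (filter_congr fun Y _ => ?_)
    simp only [occCount_append_singleton, hsuf, and_true]
    constructor
    · rintro ⟨hocc, hx, hu⟩
      rw [if_pos hu] at hocc
      exact ⟨by omega, (hpre hu).mp hx, hu⟩
    · rintro ⟨hocc, hx, hu⟩
      rw [if_pos hu, hocc]
      exact ⟨rfl, (hpre hu).mpr hx, hu⟩
  · intro a _ ha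
    rw [card_eq_zero, filter_eq_empty_iff]
    rintro Y - ⟨-, -, hY⟩
    exact ha ((hsuf Y a).mp hY).2.symm
  · simp

-- Appending a letter to a `w`-avoiding string creates at most one occurrence, at the end.
theorem mul_Nxy_zero_eq_add (w : List (Fin b)) (m : ℕ) :
    b * Nxy b w [] [] 0 m = Nxy b w [] [] 0 (m + 1) + Nxy b w [] w 1 (m + 1) := by
  simp only [Nxy_eq_card]
  rw [← card_union_of_disjoint (disjoint_filter.mpr fun _ _ h₀ h₁ => by omega), ← filter_or,
    card_filter_words_succ]
  have hsplit (Y : List (Fin b)) (a : Fin b) :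
      (occCount w (Y ++ [a]) = 0 ∧ [] <+: Y ++ [a] ∧ [] <:+ Y ++ [a]) ∨
        (occCount w (Y ++ [a]) = 1 ∧ [] <+: Y ++ [a] ∧ w <:+ Y ++ [a]) ↔
      occCount w Y = 0 ∧ [] <+: Y ∧ [] <:+ Y := by
    simp only [occCount_append_singleton, List.nil_prefix, List.nil_suffix, and_true]
    split_ifs <;> simp_all
  simp only [hsplit, sum_const, card_univ, Fintype.card_fin, smul_eq_mul]

theorem Nxy_one_prefix_eq_suffix (w : List (Fin b)) (m : ℕ) :
    Nxy b w w [] 1 (m + 1) = Nxy b w [] w 1 (m + 1) := by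
  have h := mul_Nxy_zero_eq_add w m
  have hrev := mul_Nxy_zero_eq_add w.reverse m
  have e₀ (l : ℕ) : Nxy b w.reverse [] [] 0 l = Nxy b w [] [] 0 l := Nxy_reverse w [] [] 0 l
  have e₁ : Nxy b w.reverse [] w.reverse 1 (m + 1) = Nxy b w w [] 1 (m + 1) :=
    Nxy_reverse w w [] 1 (m + 1)
  rw [e₀, e₀, e₁] at hrev
  omega

theorem Nxy_zero_suffix_eq_prefix (hw : w ≠ []) (n : ℕ) :
    Nxy b w [] (w.take (w.length - 1)) 0 n = Nxy b w (w.drop 1) [] 0 n := by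
  have hp : 0 < w.length := List.length_pos_iff.mpr hw
  have hdrop : (w.reverse.take (w.reverse.length - 1)).reverse = w.drop 1 := by
    rw [List.take_reverse, List.reverse_reverse, List.length_reverse]
    congr 1
    omega
  calc Nxy b w [] (w.take (w.length - 1)) 0 n
      = Nxy b w [] w 1 (n + 1) := (Nxy_one_suffix_succ (by simpa using hp) n).symm
    _ = Nxy b w.reverse [] w.reverse 1 (n + 1) := by
        rw [← Nxy_one_prefix_eq_suffix, ← Nxy_reverse w w []]; rfl
    _ = Nxy b w.reverse [] (w.reverse.take (w.reverse.length - 1)) 0 n :=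
        Nxy_one_suffix_succ (by simpa using hp) n
    _ = Nxy b w (w.drop 1) [] 0 n := by
        rw [← Nxy_reverse w (w.drop 1) [], ← hdrop, List.reverse_reverse]; rfl

-- Cut just after the first occurrence of `w`; the two pieces overlap in `w.drop 1`.
theorem Nxy_succ_eq_sum (hx : x.length < w.length) (k n : ℕ) :
    Nxy b w x [] (k + 1) n = ∑ ac ∈ antidiagonal (n + (w.length - 1)),
      Nxy b w x w 1 ac.1 * Nxy b w (w.drop 1) [] k ac.2 := by
  have hw : w ≠ [] := List.ne_nil_of_length_pos (by omega)
  have hv : (w.drop 1).length = w.length - 1 := List.length_drop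
  simp only [Nxy_eq_card, ← card_product, List.nil_suffix, and_true]
  rw [← card_sigma]
  symm
  refine card_bij (fun s _ => s.2.1 ++ s.2.2.drop (w.length - 1)) ?_ ?_ ?_
  · rintro ⟨⟨a, c⟩, Y, T⟩ hs
    simp only [mem_sigma, HasAntidiagonal.mem_antidiagonal, mem_product, mem_filter,
      mem_words] at hs ⊢
    obtain ⟨hac, ⟨rfl, hY1, hxY, hwY⟩, rfl, hTk, hvT⟩ := hs
    have hT : w.drop 1 ++ T.drop (w.length - 1) = T := by
      rw [← hv]; exact List.prefix_iff_eq_append.mp hvT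
    have := hvT.length_le
    refine ⟨by simp; omega, ?_, hxY.trans (List.prefix_append _ _)⟩
    rw [occCount_append_of_suffix hw hwY, hT, hY1, hTk, add_comm]
  · rintro ⟨⟨a₁, c₁⟩, Y₁, T₁⟩ hs₁ ⟨⟨a₂, c₂⟩, Y₂, T₂⟩ hs₂ h
    simp only [mem_sigma, HasAntidiagonal.mem_antidiagonal, mem_product, mem_filter,
      mem_words] at hs₁ hs₂ h
    obtain ⟨-, ⟨rfl, hY₁, -, hwY₁⟩, rfl, -, hvT₁⟩ := hs₁
    obtain ⟨-, ⟨rfl, hY₂, -, hwY₂⟩, rfl, -, hvT₂⟩ := hs₂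
    obtain rfl := eq_of_append_eq_append_of_occCount_eq_one hw h hwY₁ hwY₂ hY₁ hY₂
    have hT : T₁ = T₂ := by
      rw [← List.prefix_iff_eq_append.mp hvT₁, ← List.prefix_iff_eq_append.mp hvT₂, hv,
        List.append_cancel_left h]
    subst hT
    rfl
  · intro X hX
    simp only [mem_filter, mem_words] at hX
    obtain ⟨rfl, hX, hxX⟩ := hX
    obtain ⟨Y, R, rfl, hwY, hY1⟩ :=
      exists_append_eq_of_occCount_ne_zero (w := w) (X := X) (by omega)
    have := hwY.length_le
    refine ⟨⟨(Y.length, (w.drop 1 ++ R).length), Y, w.drop 1 ++ R⟩, ?_, ?_⟩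
    · simp only [mem_sigma, HasAntidiagonal.mem_antidiagonal, mem_product, mem_filter, mem_words]
      rw [occCount_append_of_suffix hw hwY, hY1] at hX
      refine ⟨by simp; omega, ⟨trivial, hY1, ?_, hwY⟩, trivial, by omega,
        List.prefix_append _ _⟩
      exact List.prefix_of_prefix_length_le hxX (List.prefix_append _ _) (by omega)
    · simp only
      rw [List.drop_left' hv]

end counting

section generatingSeries

variable {b : ℕ} {w x : List (Fin b)}

theorem Zser_one_suffix (hx : x.length < w.length) :
    Zser b w x w 1 = X * Zser b w x (w.take (w.length - 1)) 0 := by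
  ext (_ | n)
  · simp [Zser, Nxy_eq_zero_of_lt_length_suffix (show 0 < w.length by omega)]
  · simp [Zser, Nxy_one_suffix_succ hx]

theorem X_pow_mul_Zser_succ (hx : x.length < w.length) (k : ℕ) :
    X ^ (w.length - 1) * Zser b w x [] (k + 1) = Zser b w x w 1 * Zser b w (w.drop 1) [] k := by
  ext m
  rw [coeff_X_pow_mul', coeff_mul]
  split_ifs with hm
  · obtain ⟨n, rfl⟩ := Nat.exists_eq_add_of_le' hm
    simp [Zser, Nxy_succ_eq_sum hx]
  · refine (sum_eq_zero fun ac hac => ?_).symm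
    have hc : ac.2 < (w.drop 1).length := by
      rw [HasAntidiagonal.mem_antidiagonal] at hac
      simp only [List.length_drop]
      omega
    rw [Zser, Zser, coeff_mk, coeff_mk, Nxy_eq_zero_of_lt_length_prefix hc, Nat.cast_zero,
      mul_zero]

theorem Zser_zero_suffix_eq_prefix (hw : w ≠ []) :
    Zser b w [] (w.take (w.length - 1)) 0 = Zser b w (w.drop 1) [] 0 := by
  ext n
  simp [Zser, Nxy_zero_suffix_eq_prefix hw n]

theorem X_pow_mul_Zser_drop_one (hw : w ≠ []) (m : ℕ) :
    X ^ ((w.length - 1) * m) * Zser b w (w.drop 1) [] m =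
      (X * Zser b w (w.drop 1) (w.take (w.length - 1)) 0) ^ m * Zser b w (w.drop 1) [] 0 := by
  have hv : (w.drop 1).length < w.length := by
    rw [List.length_drop]
    have := List.length_pos_iff.mpr hw
    omega
  induction m with
  | zero => simp
  | succ m ih =>
    rw [Nat.mul_succ, pow_add, mul_assoc, X_pow_mul_Zser_succ hv, Zser_one_suffix hv, mul_left_comm,
      ih]
    ring

end generatingSeries

/-- Stated multiplied through by `t^{pk}`, so that no negative powers of `t` occur. -/
theorem stmt9_general (b : ℕ) (w : List (Fin b)) (hw : 1 ≤ w.length)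
    (k : ℕ) (hk : 1 ≤ k) :
    (X : PowerSeries ℚ) ^ (w.length * k) * Zser b w [] [] k =
      X ^ (2 * k) * Zser b w (w.drop 1) (w.take (w.length - 1)) 0 ^ (k - 1) *
        Zser b w (w.drop 1) [] 0 ^ 2 := by
  have hne : w ≠ [] := List.ne_nil_of_length_pos hw
  obtain ⟨k, rfl⟩ := Nat.exists_eq_add_of_le' hk
  have hfirst : X ^ (w.length - 1) * Zser b w [] [] (k + 1) =
      X * Zser b w (w.drop 1) [] 0 * Zser b w (w.drop 1) [] k := by
    have hx : ([] : List (Fin b)).length < w.length := hw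
    rw [X_pow_mul_Zser_succ hx, Zser_one_suffix hx, Zser_zero_suffix_eq_prefix hne]
  have hexp : w.length * (k + 1) = (k + 1) + (w.length - 1) * k + (w.length - 1) := by
    obtain ⟨p, hp⟩ := Nat.exists_eq_add_of_le' hw
    rw [hp, Nat.add_sub_cancel]
    ring
  rw [hexp, Nat.add_sub_cancel, pow_add, pow_add, mul_assoc, hfirst]
  calc X ^ (k + 1) * X ^ ((w.length - 1) * k) *
        (X * Zser b w (w.drop 1) [] 0 * Zser b w (w.drop 1) [] k)
      = X ^ (k + 1) * X * Zser b w (w.drop 1) [] 0 *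
          (X ^ ((w.length - 1) * k) * Zser b w (w.drop 1) [] k) := by ring
    _ = _ := by rw [X_pow_mul_Zser_drop_one hne]; ring

/-- `Z_w(k) = t^{2-p} (t^{2-p} Z_w(v,0,u))^{k-1} Z_w(v,0)^2` for `k ≥ 1` (stated
multiplied through by `t^{pk}` to avoid negative exponents):
`t^{pk} Z_w(k) = t^{2k} Z_w(v,0,u)^{k-1} Z_w(v,0)^2`. -/
theorem stmt9 (b : ℕ) (hb : 1 < b) (w : List (Fin b)) (hw : 1 ≤ w.length)
    (k : ℕ) (hk : 1 ≤ k) :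
    (X : PowerSeries ℚ) ^ (w.length * k) * Zser b w [] [] k =
      X ^ (2 * k) * Zser b w (w.drop 1) (w.take (w.length - 1)) 0 ^ (k - 1) *
        Zser b w (w.drop 1) [] 0 ^ 2 :=
  stmt9_general b w hw k hk
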